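/- Let n ≥ 1, let ε_1,…,ε_n > 0, set B = Σ_{i=1}^n 1/(1+e^{ε_i}) and assume n − 2B ≠ 0. Let c ∈ [0,1] and let x_1,…,x_n be i.i.d. Bernoulli(c) random variables. Independently of the x's, for each i let y_i be Bernoulli with success probability e^{ε_i}/(1+e^{ε_i}) conditionally on x_i = 1 and success probability 1/(1+e^{ε_i}) conditionally on x_i = 0, with y_1,…,y_n conditionally independent given the x's. Let A = Σ_{i=1}^n y_i and z = (A − B)/(n − 2B). Then E[z] = c. -/

import Mathlib

/-! Randomized response reports a `1` with probability `q + c (1 - 2q)`, where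
`q = 1 / (1 + e^ε)`: the bias `q` does not depend on the input and the signal is damped by the
known factor `1 - 2q`. By linearity `E[A] = B + c (n - 2B)`, so subtracting `B` and rescaling
by `n - 2B` recovers `c`. -/

open MeasureTheory ProbabilityTheory

noncomputable section

/-- Joint law of a pair `(x, y)` where `x ~ Bernoulli(c)` and, conditionally on `x`,
`y` is Bernoulli with success probability `e/(1+e)` if `x = 1` and `1/(1+e)` if `x = 0`
(here `e = e^ε`). -/
def pairLaw (c e : ℝ) : Measure (Bool × Bool) :=
  ENNReal.ofReal (c * (e / (1 + e))) • Measure.dirac (true, true) +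
    ENNReal.ofReal (c * (1 / (1 + e))) • Measure.dirac (true, false) +
    ENNReal.ofReal ((1 - c) * (1 / (1 + e))) • Measure.dirac (false, true) +
    ENNReal.ofReal ((1 - c) * (e / (1 + e))) • Measure.dirac (false, false)

lemma integral_finset_sum_comp_eval {ι E : Type*} [Fintype ι] [NormedAddCommGroup E]
    [NormedSpace ℝ E] {X : ι → Type*} [∀ i, MeasurableSpace (X i)] (μ : ∀ i, Measure (X i))
    [∀ i, IsProbabilityMeasure (μ i)] (f : ∀ i, X i → E) (hf : ∀ i, Integrable (f i) (μ i)) :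
    ∫ x, ∑ i, f i (x i) ∂Measure.pi μ = ∑ i, ∫ x, f i x ∂μ i := by
  rw [integral_finsetSum _ fun i _ => integrable_comp_eval (hf i)]
  exact Finset.sum_congr rfl fun i _ => integral_comp_eval (hf i).aestronglyMeasurable

section pairLaw

variable {c e : ℝ}

lemma pairLaw_weights_nonneg (hc : c ∈ Set.Icc (0 : ℝ) 1) (he : 0 ≤ e) :
    0 ≤ c * (e / (1 + e)) ∧ 0 ≤ c * (1 / (1 + e)) ∧ 0 ≤ (1 - c) * (1 / (1 + e)) ∧
      0 ≤ (1 - c) * (e / (1 + e)) := by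
  obtain ⟨hc0, hc1⟩ := hc
  have hc' : 0 ≤ 1 - c := sub_nonneg.mpr hc1
  refine ⟨?_, ?_, ?_, ?_⟩ <;> positivity

lemma isProbabilityMeasure_pairLaw (hc : c ∈ Set.Icc (0 : ℝ) 1) (he : 0 ≤ e) :
    IsProbabilityMeasure (pairLaw c e) := by
  obtain ⟨h1, h2, h3, h4⟩ := pairLaw_weights_nonneg hc he
  constructor
  simp only [pairLaw, Measure.coe_add, Measure.coe_smul, Pi.add_apply, Pi.smul_apply,
    measure_univ, smul_eq_mul, mul_one]
  rw [← ENNReal.ofReal_add h1 h2, ← ENNReal.ofReal_add (by positivity) h3,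
    ← ENNReal.ofReal_add (by positivity) h4, ← ENNReal.ofReal_one]
  congr 1
  field_simp
  ring

lemma integral_pairLaw (hc : c ∈ Set.Icc (0 : ℝ) 1) (he : 0 ≤ e) (g : Bool × Bool → ℝ) :
    ∫ p, g p ∂pairLaw c e =
      c * (e / (1 + e)) * g (true, true) + c * (1 / (1 + e)) * g (true, false) +
        (1 - c) * (1 / (1 + e)) * g (false, true) + (1 - c) * (e / (1 + e)) * g (false, false) := by
  obtain ⟨h1, h2, h3, h4⟩ := pairLaw_weights_nonneg hc he
  have := isProbabilityMeasure_pairLaw hc he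
  rw [one_div] at h2 h3
  rw [integral_fintype Integrable.of_finite]
  simp [Measure.real, pairLaw, Fintype.sum_prod_type, h1, h2, h3, h4, add_assoc]

lemma integral_snd_pairLaw (hc : c ∈ Set.Icc (0 : ℝ) 1) (he : 0 ≤ e) :
    ∫ p, (if p.2 then (1 : ℝ) else 0) ∂pairLaw c e = 1 / (1 + e) + c * (1 - 2 * (1 / (1 + e))) := by
  rw [integral_pairLaw hc he]
  simp only [if_true, Bool.false_eq_true, if_false, mul_one, mul_zero, add_zero]
  field_simp
  ring

end pairLaw

theorem statement_12_general (n : ℕ) (ε : ℕ → ℝ)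
    (c : ℝ) (hc : c ∈ Set.Icc (0:ℝ) 1)
    (hB : (n : ℝ) - 2 * (∑ i ∈ Finset.range n, 1 / (1 + Real.exp (ε i))) ≠ 0) :
    ∫ ω, ((∑ i : Fin n, if (ω i).2 then (1:ℝ) else 0) -
          ∑ i ∈ Finset.range n, 1 / (1 + Real.exp (ε i))) /
        ((n : ℝ) - 2 * ∑ i ∈ Finset.range n, 1 / (1 + Real.exp (ε i)))
      ∂(Measure.pi fun i : Fin n => pairLaw c (Real.exp (ε i.1))) = c := by
  set B := ∑ i ∈ Finset.range n, 1 / (1 + Real.exp (ε i))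
  have := fun i : Fin n => isProbabilityMeasure_pairLaw hc (Real.exp_pos (ε i)).le
  have hA : ∫ ω, (∑ i : Fin n, if (ω i).2 then (1 : ℝ) else 0)
      ∂(Measure.pi fun i : Fin n => pairLaw c (Real.exp (ε i.1))) = B + c * (n - 2 * B) := by
    rw [integral_finset_sum_comp_eval (fun i : Fin n => pairLaw c (Real.exp (ε i.1)))
      (fun _ p => if p.2 then (1 : ℝ) else 0)
      fun _ => Integrable.of_finite]
    simp only [integral_snd_pairLaw hc (Real.exp_pos _).le, Finset.sum_add_distrib,
      ← Finset.mul_sum, Finset.sum_sub_distrib,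
      Fin.sum_univ_eq_sum_range (fun i => 1 / (1 + Real.exp (ε i))) n]
    simp only [Finset.sum_const, Finset.card_fin, nsmul_eq_mul, mul_one, B]
  rw [integral_div, integral_sub Integrable.of_finite (integrable_const _), integral_const, hA]
  simp only [probReal_univ, smul_eq_mul, one_mul]
  rw [add_sub_cancel_left, mul_div_cancel_right₀ _ hB]

/-- the randomized-response frequency estimator
`z = (A - B)/(n - 2B)` is unbiased: `E[z] = c`. -/
theorem statement_12 (n : ℕ) (hn : 1 ≤ n) (ε : ℕ → ℝ) (hε : ∀ i < n, 0 < ε i)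
    (c : ℝ) (hc : c ∈ Set.Icc (0:ℝ) 1)
    (hB : (n : ℝ) - 2 * (∑ i ∈ Finset.range n, 1 / (1 + Real.exp (ε i))) ≠ 0) :
    ∫ ω, ((∑ i : Fin n, if (ω i).2 then (1:ℝ) else 0) -
          ∑ i ∈ Finset.range n, 1 / (1 + Real.exp (ε i))) /
        ((n : ℝ) - 2 * ∑ i ∈ Finset.range n, 1 / (1 + Real.exp (ε i)))
      ∂(Measure.pi fun i : Fin n => pairLaw c (Real.exp (ε i.1))) = c :=
  statement_12_general n ε c hc hB

end
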